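/- arXiv:1605.03768 — 6 statements merged into one kernel-verified Lean document; each statement's English description precedes it below -/
import Mathlib

section
/- Let (Ω,P) be a probability space carrying a random variable H with the exponential distribution of rate 1, and two Bernoulli random variables B0 and B1 with success probability p ∈ [0,1], such that H, B0, B1 are mutually independent. Fix γ̄ > 0 (mean SNR), μ > 0 (interference-to-noise ratio) and a water-filling threshold η > 0. Define the fed-back SINR γ_fb = γ̄·H if B0 = 0 and γ_fb = γ̄·H/(1+μ) if B0 = 1, and define the realized per-symbol spectral efficiency R = log₂(γ_fb/η) if γ_fb ≥ η and not (B0 = 0 and B1 = 1), and R = 0 otherwise (the case B0 = 0, B1 = 1 is an outage, and no rate is transmitted when γ_fb < η). Then the average spectral efficiency satisfies E[R] = (1−p)²·∫_η^∞ log₂(γ/η)·(1/γ̄)·e^{−γ/γ̄} dγ + p·∫_η^∞ log₂(γ/η)·((1+μ)/γ̄)·e^{−γ(1+μ)/γ̄} dγ. -/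
/-!
The rate vanishes on the outage event `{B0 = 0, B1 = 1}`, so
`R = 1{B0 = B1 = 0} · r(γ̄ H) + 1{B0 = 1} · r(γ̄ H / (1 + μ))`, where `r` is the water-filling rate.
Since `(B0, B1)` is independent of `H`, each expectation factors into `P(B0 = B1 = 0) = (1 - p)²`,
resp. `P(B0 = 1) = p`, times `E r(c H)`; and `c H` is exponential with mean `c`, so `E r(c H)` is
the integral of `r` against the density `(1/c) e^{-γ/c}`.
-/

open MeasureTheory ProbabilityTheory Real Set

namespace ProbabilityTheory

lemma expMeasure_eq_withDensity (r : ℝ) :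
    expMeasure r = (volume.restrict (Ici 0)).withDensity
      (fun x => ENNReal.ofReal (r * exp (-(r * x)))) := by
  rw [← withDensity_indicator measurableSet_Ici]
  show volume.withDensity (exponentialPDF r) = _
  refine congrArg _ (funext fun x => ?_)
  by_cases hx : 0 ≤ x
  · rw [exponentialPDF_of_nonneg hx, indicator_of_mem (mem_Ici.2 hx)]
  · rw [exponentialPDF_of_neg (not_le.1 hx), indicator_of_notMem (by simpa using hx)]

lemma integral_expMeasure {r : ℝ} (hr : 0 < r) (f : ℝ → ℝ) :
    ∫ x, f x ∂expMeasure r = ∫ x in Ici 0, f x * (r * exp (-(r * x))) := by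
  rw [expMeasure_eq_withDensity, integral_withDensity_eq_integral_toReal_smul (by fun_prop)
    (Filter.Eventually.of_forall fun _ => ENNReal.ofReal_lt_top)]
  refine integral_congr_ae (Filter.Eventually.of_forall fun x => ?_)
  simp only [ENNReal.toReal_ofReal (by positivity : 0 ≤ r * exp (-(r * x))), smul_eq_mul, mul_comm]

lemma integrable_expMeasure_iff {r : ℝ} (hr : 0 < r) {f : ℝ → ℝ} :
    Integrable f (expMeasure r) ↔ IntegrableOn (fun x => f x * (r * exp (-(r * x)))) (Ici 0) := by
  rw [expMeasure_eq_withDensity, integrable_withDensity_iff_integrable_smul' (by fun_prop)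
    (Filter.Eventually.of_forall fun _ => ENNReal.ofReal_lt_top), IntegrableOn]
  refine integrable_congr (Filter.Eventually.of_forall fun x => ?_)
  simp only [ENNReal.toReal_ofReal (by positivity : 0 ≤ r * exp (-(r * x))), smul_eq_mul, mul_comm]

lemma hasLaw_const_mul_expMeasure {c : ℝ} (hc : 0 < c) :
    HasLaw (fun x => c * x) (expMeasure c⁻¹) (expMeasure 1) where
  map_eq := by
    have := isProbabilityMeasure_expMeasure one_pos
    have := isProbabilityMeasure_expMeasure (inv_pos.2 hc)
    have : IsProbabilityMeasure ((expMeasure 1).map (fun x => c * x)) :=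
      Measure.isProbabilityMeasure_map (by fun_prop)
    refine Measure.eq_of_cdf _ _ (StieltjesFunction.ext fun x => ?_)
    have hpre : (fun y => c * y) ⁻¹' Iic x = Iic (x / c) := by
      ext y; simp [le_div_iff₀ hc, mul_comm]
    rw [cdf_eq_real, map_measureReal_apply (by fun_prop) measurableSet_Iic, hpre, ← cdf_eq_real,
      cdf_expMeasure_eq one_pos, cdf_expMeasure_eq (inv_pos.2 hc)]
    simp only [one_mul, div_eq_inv_mul, mul_nonneg_iff_of_pos_left (inv_pos.2 hc)]

variable {Ω : Type*} [MeasurableSpace Ω] {P : Measure Ω}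

lemma IndepFun.integral_indicator_preimage_mul {α β : Type*} [MeasurableSpace α]
    [MeasurableSpace β] {X : Ω → α} {Y : Ω → β} (hXY : IndepFun X Y P) (hX : Measurable X)
    (hY : AEMeasurable Y P) {A : Set α} (hA : MeasurableSet A) {f : β → ℝ} (hf : Measurable f) :
    ∫ ω, (X ⁻¹' A).indicator (fun ω => f (Y ω)) ω ∂P = P.real (X ⁻¹' A) * ∫ ω, f (Y ω) ∂P := by
  have hind : IndepFun ((X ⁻¹' A).indicator (1 : Ω → ℝ)) (fun ω => f (Y ω)) P :=
    hXY.comp (measurable_one.indicator hA) hf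
  rw [← integral_indicator_one (hX hA), ← hind.integral_fun_mul_eq_mul_integral
    (measurable_one.indicator (hX hA)).aestronglyMeasurable
    (hf.comp_aemeasurable hY).aestronglyMeasurable]
  congr 1 with ω
  by_cases hω : ω ∈ X ⁻¹' A <;> simp [hω]

lemma IndepFun.measureReal_inter_preimage_eq_mul {α β : Type*} [MeasurableSpace α]
    [MeasurableSpace β] {X : Ω → α} {Y : Ω → β} (hXY : IndepFun X Y P) {s : Set α} {t : Set β}
    (hs : MeasurableSet s) (ht : MeasurableSet t) :
    P.real (X ⁻¹' s ∩ Y ⁻¹' t) = P.real (X ⁻¹' s) * P.real (Y ⁻¹' t) := by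
  simp only [measureReal_def, hXY.measure_inter_preimage_eq_mul s t hs ht, ENNReal.toReal_mul]

lemma probReal_preimage_zero_eq_one_sub [IsProbabilityMeasure P] {B : Ω → ℝ} (hB : Measurable B)
    (h01 : ∀ ω, B ω = 0 ∨ B ω = 1) : P.real (B ⁻¹' {0}) = 1 - P.real (B ⁻¹' {1}) := by
  have hcompl : B ⁻¹' {0} = (B ⁻¹' {1})ᶜ := by
    ext ω; rcases h01 ω with h | h <;> simp [h]
  rw [hcompl, probReal_compl_eq_one_sub (hB (measurableSet_singleton 1))]

end ProbabilityTheory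

lemma logb_two_div_le {η x : ℝ} (hη : 0 < η) (hx : 0 ≤ x) :
    logb 2 (x / η) ≤ x / (η * log 2) := by
  rw [logb, ← div_div, div_le_div_iff_of_pos_right (log_pos one_lt_two)]
  exact log_le_self (by positivity)

lemma integrableOn_logb_div_mul_exp {η r : ℝ} (hη : 0 < η) (hr : 0 < r) :
    IntegrableOn (fun x => logb 2 (x / η) * (r * exp (-(r * x)))) (Ici η) := by
  have hbound : IntegrableOn (fun x => r / (η * log 2) * (x ^ (1 : ℝ) * exp (-r * x ^ (1 : ℝ))))
      (Ici η) :=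
    IntegrableOn.mono_set
      ((integrableOn_rpow_mul_exp_neg_mul_rpow (s := 1) (by norm_num) one_pos hr).const_mul _)
      fun x hx => lt_of_lt_of_le hη hx
  have hmeas : Measurable fun x => logb 2 (x / η) * (r * exp (-(r * x))) := by
    unfold logb; fun_prop
  refine hbound.mono' hmeas.aestronglyMeasurable
    ((ae_restrict_iff' measurableSet_Ici).2 (Filter.Eventually.of_forall fun x hx => ?_))
  have hx0 : 0 ≤ x := hη.le.trans hx
  have hlog0 : 0 ≤ logb 2 (x / η) := logb_nonneg one_lt_two ((one_le_div hη).2 hx)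
  rw [rpow_one, norm_mul, Real.norm_of_nonneg hlog0, Real.norm_of_nonneg (by positivity), neg_mul]
  calc logb 2 (x / η) * (r * exp (-(r * x))) ≤ x / (η * log 2) * (r * exp (-(r * x))) := by
        gcongr; exact logb_two_div_le hη hx0
    _ = r / (η * log 2) * (x * exp (-(r * x))) := by ring

noncomputable def waterFillingRate (η γ : ℝ) : ℝ := if η ≤ γ then logb 2 (γ / η) else 0

lemma measurable_waterFillingRate (η : ℝ) : Measurable (waterFillingRate η) :=
  Measurable.ite measurableSet_Ici (by unfold logb; fun_prop) measurable_const

lemma waterFillingRate_mul_eq_indicator (η : ℝ) (g : ℝ → ℝ) :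
    (fun γ => waterFillingRate η γ * g γ) = (Ici η).indicator fun γ => logb 2 (γ / η) * g γ := by
  ext γ
  simp only [waterFillingRate, indicator_apply, mem_Ici]
  split_ifs <;> simp

lemma integrable_waterFillingRate_expMeasure {η r : ℝ} (hη : 0 < η) (hr : 0 < r) :
    Integrable (waterFillingRate η) (expMeasure r) := by
  rw [integrable_expMeasure_iff hr, waterFillingRate_mul_eq_indicator]
  exact ((integrableOn_logb_div_mul_exp hη hr).integrable_indicator measurableSet_Ici).integrableOn

lemma integral_waterFillingRate_expMeasure {η r : ℝ} (hη : 0 < η) (hr : 0 < r) :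
    ∫ γ, waterFillingRate η γ ∂expMeasure r
      = ∫ γ in Ioi η, logb 2 (γ / η) * (r * exp (-(r * γ))) := by
  rw [integral_expMeasure hr, waterFillingRate_mul_eq_indicator, setIntegral_indicator measurableSet_Ici,
    inter_eq_right.2 (Ici_subset_Ici.2 hη.le), integral_Ici_eq_integral_Ioi]

namespace ProbabilityTheory

variable {Ω : Type*} [MeasurableSpace Ω] {P : Measure Ω} {H : Ω → ℝ} {η c : ℝ}

lemma HasLaw.integrable_waterFillingRate_const_mul (hH : HasLaw H (expMeasure 1) P)
    (hη : 0 < η) (hc : 0 < c) : Integrable (fun ω => waterFillingRate η (c * H ω)) P := by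
  have hcH : HasLaw (fun ω => c * H ω) (expMeasure c⁻¹) P :=
    (hasLaw_const_mul_expMeasure hc).comp hH
  have h := integrable_waterFillingRate_expMeasure hη (inv_pos.2 hc)
  rw [← hcH.map_eq] at h
  exact h.comp_aemeasurable hcH.aemeasurable

lemma HasLaw.integral_waterFillingRate_const_mul (hH : HasLaw H (expMeasure 1) P)
    (hη : 0 < η) (hc : 0 < c) :
    ∫ ω, waterFillingRate η (c * H ω) ∂P
      = ∫ γ in Ioi η, logb 2 (γ / η) * ((1 / c) * exp (-γ / c)) := by
  have hcH : HasLaw (fun ω => c * H ω) (expMeasure c⁻¹) P :=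
    (hasLaw_const_mul_expMeasure hc).comp hH
  rw [← Function.comp_def (waterFillingRate η) (fun ω => c * H ω),
    hcH.integral_comp (measurable_waterFillingRate η).aestronglyMeasurable,
    integral_waterFillingRate_expMeasure hη (inv_pos.2 hc)]
  simp only [one_div, neg_div, inv_mul_eq_div]

lemma HasLaw.integral_indicator_waterFillingRate_const_mul {α : Type*} [MeasurableSpace α]
    {X : Ω → α} (hH : HasLaw H (expMeasure 1) P) (hXH : IndepFun X H P) (hX : Measurable X)
    {A : Set α} (hA : MeasurableSet A) (hη : 0 < η) (hc : 0 < c) :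
    ∫ ω, (X ⁻¹' A).indicator (fun ω => waterFillingRate η (c * H ω)) ω ∂P
      = P.real (X ⁻¹' A) * ∫ γ in Ioi η, logb 2 (γ / η) * ((1 / c) * exp (-γ / c)) := by
  rw [hXH.integral_indicator_preimage_mul hX hH.aemeasurable hA
      (f := fun h => waterFillingRate η (c * h))
      ((measurable_waterFillingRate η).comp (measurable_const_mul c)),
    hH.integral_waterFillingRate_const_mul hη hc]

end ProbabilityTheory

theorem conventional_wf_average_spectral_efficiency_general
    {Ω : Type*} [MeasurableSpace Ω] (Pr : Measure Ω) [IsProbabilityMeasure Pr]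
    (H B0 B1 : Ω → ℝ) (hHm : Measurable H) (hB0m : Measurable B0) (hB1m : Measurable B1)
    (hH : Measure.map H Pr = ProbabilityTheory.expMeasure 1)
    (p : ℝ) (hp0 : 0 ≤ p)
    (hB0 : ∀ ω, B0 ω = 0 ∨ B0 ω = 1) (hB1 : ∀ ω, B1 ω = 0 ∨ B1 ω = 1)
    (hB0p : Pr {ω | B0 ω = 1} = ENNReal.ofReal p)
    (hB1p : Pr {ω | B1 ω = 1} = ENNReal.ofReal p)
    (hindep : iIndepFun ![H, B0, B1] Pr)
    (γbar μ η : ℝ) (hγbar : 0 < γbar) (hμ : 0 < μ) (hη : 0 < η)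
    (γfb : Ω → ℝ)
    (hγfb : ∀ ω, γfb ω = if B0 ω = 0 then γbar * H ω else γbar * H ω / (1 + μ))
    (R : Ω → ℝ)
    (hR : ∀ ω, R ω =
      if η ≤ γfb ω ∧ ¬(B0 ω = 0 ∧ B1 ω = 1) then Real.logb 2 (γfb ω / η) else 0) :
    ∫ ω, R ω ∂Pr
      = (1 - p) ^ 2 *
          (∫ γ in Ioi η, Real.logb 2 (γ / η) * ((1 / γbar) * Real.exp (-γ / γbar)))
        + p *
          (∫ γ in Ioi η,
            Real.logb 2 (γ / η) * (((1 + μ) / γbar) * Real.exp (-(γ * (1 + μ)) / γbar))) := by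
  have hlaw : HasLaw H (expMeasure 1) Pr := ⟨hHm.aemeasurable, hH⟩
  have hc : 0 < γbar / (1 + μ) := by positivity
  have hmeas : ∀ i, Measurable (![H, B0, B1] i) := by
    intro i; fin_cases i <;> assumption
  have hB01H : IndepFun (fun ω => (B0 ω, B1 ω)) H Pr :=
    hindep.indepFun_prodMk hmeas 1 2 0 (by decide) (by decide)
  have hB0H : IndepFun B0 H Pr := hindep.indepFun (i := 1) (j := 0) (by decide)
  have hB0B1 : IndepFun B0 B1 Pr := hindep.indepFun (i := 1) (j := 2) (by decide)
  have hB01m : Measurable fun ω => (B0 ω, B1 ω) := hB0m.prodMk hB1m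
  have hzero : MeasurableSet ({0} ×ˢ {0} : Set (ℝ × ℝ)) :=
    (measurableSet_singleton 0).prod (measurableSet_singleton 0)
  have hone : MeasurableSet ({1} : Set ℝ) := measurableSet_singleton 1
  have hprob : ∀ B : Ω → ℝ, Pr {ω | B ω = 1} = ENNReal.ofReal p → Pr.real (B ⁻¹' {1}) = p :=
    fun B hB => (congrArg ENNReal.toReal hB).trans (ENNReal.toReal_ofReal hp0)
  have hboth_zero : Pr.real ((fun ω => (B0 ω, B1 ω)) ⁻¹' {0} ×ˢ {0}) = (1 - p) ^ 2 := by
    rw [mk_preimage_prod, hB0B1.measureReal_inter_preimage_eq_mul (measurableSet_singleton 0)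
      (measurableSet_singleton 0), probReal_preimage_zero_eq_one_sub hB0m hB0,
      probReal_preimage_zero_eq_one_sub hB1m hB1, hprob B0 hB0p, hprob B1 hB1p, sq]
  have hsplit : R = fun ω =>
      ((fun ω => (B0 ω, B1 ω)) ⁻¹' {0} ×ˢ {0}).indicator
          (fun ω => waterFillingRate η (γbar * H ω)) ω
        + (B0 ⁻¹' {1}).indicator (fun ω => waterFillingRate η (γbar / (1 + μ) * H ω)) ω := by
    funext ω
    rcases hB0 ω with h0 | h0 <;> rcases hB1 ω with h1 | h1 <;>
      simp [hR, hγfb, h0, h1, waterFillingRate, mul_div_right_comm]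
  rw [hsplit, integral_add
      ((hlaw.integrable_waterFillingRate_const_mul hη hγbar).indicator (hB01m hzero))
      ((hlaw.integrable_waterFillingRate_const_mul hη hc).indicator (hB0m hone)),
    hlaw.integral_indicator_waterFillingRate_const_mul hB01H hB01m hzero hη hγbar,
    hlaw.integral_indicator_waterFillingRate_const_mul hB0H hB0m hone hη hc,
    hboth_zero, hprob B0 hB0p]
  simp only [div_div_eq_mul_div, one_mul, neg_mul]

/-- Theorem 1 of the paper: with unit-rate exponential channel power `H`, Bernoulli(`p`)
interference indicators `B0` (first symbol of the coherence interval, used for feedback) and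
`B1` (transmitted symbol), all mutually independent, fed-back SINR
`γ_fb = γ̄H` if `B0 = 0` and `γ̄H/(1+μ)` if `B0 = 1`, and realized rate
`R = log₂(γ_fb/η)` when `γ_fb ≥ η` and not (`B0 = 0` and `B1 = 1`) (outage), else `0`,
the average spectral efficiency of conventional water-filling is
`(1−p)²∫_η^∞ log₂(γ/η) f_n(γ) dγ + p ∫_η^∞ log₂(γ/η) f_i(γ) dγ`. -/
theorem conventional_wf_average_spectral_efficiency
    {Ω : Type*} [MeasurableSpace Ω] (Pr : Measure Ω) [IsProbabilityMeasure Pr]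
    (H B0 B1 : Ω → ℝ) (hHm : Measurable H) (hB0m : Measurable B0) (hB1m : Measurable B1)
    (hH : Measure.map H Pr = ProbabilityTheory.expMeasure 1)
    (p : ℝ) (hp0 : 0 ≤ p) (hp1 : p ≤ 1)
    (hB0 : ∀ ω, B0 ω = 0 ∨ B0 ω = 1) (hB1 : ∀ ω, B1 ω = 0 ∨ B1 ω = 1)
    (hB0p : Pr {ω | B0 ω = 1} = ENNReal.ofReal p)
    (hB1p : Pr {ω | B1 ω = 1} = ENNReal.ofReal p)
    (hindep : iIndepFun ![H, B0, B1] Pr)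
    (γbar μ η : ℝ) (hγbar : 0 < γbar) (hμ : 0 < μ) (hη : 0 < η)
    (γfb : Ω → ℝ)
    (hγfb : ∀ ω, γfb ω = if B0 ω = 0 then γbar * H ω else γbar * H ω / (1 + μ))
    (R : Ω → ℝ)
    (hR : ∀ ω, R ω =
      if η ≤ γfb ω ∧ ¬(B0 ω = 0 ∧ B1 ω = 1) then Real.logb 2 (γfb ω / η) else 0) :
    ∫ ω, R ω ∂Pr
      = (1 - p) ^ 2 *
          (∫ γ in Ioi η, Real.logb 2 (γ / η) * ((1 / γbar) * Real.exp (-γ / γbar)))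
        + p *
          (∫ γ in Ioi η,
            Real.logb 2 (γ / η) * (((1 + μ) / γbar) * Real.exp (-(γ * (1 + μ)) / γbar))) :=
  conventional_wf_average_spectral_efficiency_general Pr H B0 B1 hHm hB0m hB1m hH p hp0 hB0 hB1 hB0p
    hB1p hindep γbar μ η hγbar hμ hη γfb hγfb R hR
end

section
/- Let η > 0, k > 0, μ > 0 and γ_n > η, and set γ_i = γ_n/(1+μ). If the transmitter uses the water-filling power P(γ_n) satisfying k·P(γ_n)/P̄ = 1/η − 1/γ_n and constellation size M(γ_n) = γ_n/η (so M(γ_n) − 1 = γ_n/η − 1 > 0), then for any c > 0 the probability of error of a symbol whose actual SINR is γ_i, namely c·exp(−1.5·γ_i·(1/η − 1/γ_n)/(k·(γ_n/η − 1))), equals c·exp(−1.5/(k(1+μ))). Equivalently, γ_i·(1/η − 1/γ_n)/(γ_n/η − 1) = 1/(1+μ). -/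
/-- Under water-filling power adaptation based on the clean SINR `γn` (threshold `η`,
power `P(γn)` with `k·P(γn)/P̄ = 1/η − 1/γn`, constellation size `M(γn) = γn/η`), the
probability of error of a symbol whose actual SINR is `γi = γn/(1+μ)` equals
`c·exp(−1.5/(k(1+μ)))`; equivalently `γi·(1/η − 1/γn)/(γn/η − 1) = 1/(1+μ)`. -/
theorem aggressive_wf_interfered_symbol_error
    (η k μ γn γi c P Pbar : ℝ)
    (hη : 0 < η) (hk : 0 < k) (hμ : 0 < μ) (hγn : η < γn)
    (hγi : γi = γn / (1 + μ))
    (hP : k * P / Pbar = 1 / η - 1 / γn)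
    (hc : 0 < c) :
    c * Real.exp (-1.5 * γi * (1 / η - 1 / γn) / (k * (γn / η - 1)))
      = c * Real.exp (-1.5 / (k * (1 + μ))) ∧
    γi * (1 / η - 1 / γn) / (γn / η - 1) = 1 / (1 + μ) := by
  have hγn0 : 0 < γn := hη.trans hγn
  have hμ1 : (0:ℝ) < 1 + μ := by linarith
  have hne : γn - η ≠ 0 := ne_of_gt (by linarith)
  constructor
  · congr 1
    rw [hγi]
    field_simp
  · rw [hγi]
    field_simp
end

section
/- Let 0 < P_b < c, μ ≥ 0 and k = −1.5/ln(P_b/c). Let η > 0, γ_i > η and γ_n = (1+μ)·γ_i. If power and rate are adapted using the interfered SINR γ_i (power satisfying k·P/P̄ = 1/η − 1/γ_i and M − 1 = γ_i/η − 1), then the probability of error of a symbol with actual SINR γ_n, namely c·exp(−1.5·γ_n·(1/η − 1/γ_i)/(k·(γ_i/η − 1))), equals c·(P_b/c)^{1+μ} ≤ P_b, with strict inequality when μ > 0. Hence no outage occurs for clean symbols when adaptation is based on an interfered first symbol. -/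
/-- If power and rate are adapted using the interfered SINR `γi` (threshold `η`, power
satisfying `k·P/P̄ = 1/η − 1/γi`, constellation with `M − 1 = γi/η − 1`), then the error
probability of a clean symbol with actual SINR `γn = (1+μ)·γi` equals `c·(P_b/c)^(1+μ) ≤ P_b`,
with strict inequality when `μ > 0`: no outage occurs for clean symbols. -/
theorem conservative_adaptation_clean_symbol_no_outage
    (Pb c μ k η γi γn P Pbar M : ℝ)
    (hPb : 0 < Pb) (hPbc : Pb < c) (hμ : 0 ≤ μ)
    (hk : k = -1.5 / Real.log (Pb / c))
    (hη : 0 < η) (hγi : η < γi) (hγn : γn = (1 + μ) * γi)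
    (hP : k * P / Pbar = 1 / η - 1 / γi)
    (hM : M - 1 = γi / η - 1) :
    c * Real.exp (-1.5 * γn * (1 / η - 1 / γi) / (k * (γi / η - 1)))
      = c * (Pb / c) ^ (1 + μ) ∧
    c * (Pb / c) ^ (1 + μ) ≤ Pb ∧
    (0 < μ → c * (Pb / c) ^ (1 + μ) < Pb) := by
  have hc : 0 < c := hPb.trans hPbc
  have hr : 0 < Pb / c := div_pos hPb hc
  have hr1 : Pb / c < 1 := (div_lt_one hc).mpr hPbc
  have hL : Real.log (Pb / c) < 0 := Real.log_neg hr hr1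
  have hLne : Real.log (Pb / c) ≠ 0 := ne_of_lt hL
  have hγi0 : 0 < γi := hη.trans hγi
  have hηne : η ≠ 0 := ne_of_gt hη
  have hγine : γi ≠ 0 := ne_of_gt hγi0
  have hd : γi - η ≠ 0 := sub_ne_zero.mpr (ne_of_gt hγi)
  have hexp : -1.5 * γn * (1 / η - 1 / γi) / (k * (γi / η - 1))
      = (1 + μ) * Real.log (Pb / c) := by
    subst hγn hk
    field_simp
  have h1 : c * Real.exp (-1.5 * γn * (1 / η - 1 / γi) / (k * (γi / η - 1)))
      = c * (Pb / c) ^ (1 + μ) := by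
    rw [hexp, Real.rpow_def_of_pos hr]
    ring_nf
  have hle : (Pb / c) ^ (1 + μ) ≤ Pb / c := by
    have := Real.rpow_le_rpow_of_exponent_ge hr (le_of_lt hr1)
      (by linarith : (1 : ℝ) ≤ 1 + μ)
    simpa using this
  refine ⟨h1, ?_, ?_⟩
  · calc c * (Pb / c) ^ (1 + μ) ≤ c * (Pb / c) := by
          exact mul_le_mul_of_nonneg_left hle (le_of_lt hc)
      _ = Pb := by field_simp
  · intro hμ0
    have hlt : (Pb / c) ^ (1 + μ) < Pb / c := by
      have := Real.rpow_lt_rpow_of_exponent_gt hr hr1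
        (by linarith : (1 : ℝ) < 1 + μ)
      simpa using this
    calc c * (Pb / c) ^ (1 + μ) < c * (Pb / c) := by
          exact mul_lt_mul_of_pos_left hlt hc
      _ = Pb := by field_simp
end

section
/- The function φ(α) = ∫_α^∞ (1/α − 1/H)·e^{−H} dH is strictly decreasing on (0,∞). -/
open MeasureTheory Real Set

lemma wf_exp_int (c : ℝ) : IntegrableOn (fun H : ℝ => Real.exp (-H)) (Ioi c) := by
  simpa using exp_neg_integrableOn_Ioi c (b := 1) one_pos

lemma wf_int {c d : ℝ} (hc : 0 < c) (hcd : c ≤ d) :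
    IntegrableOn (fun H : ℝ => (1 / c - 1 / H) * Real.exp (-H)) (Ioi d) := by
  refine Integrable.mono ((wf_exp_int d).const_mul (1 / c)) ?_ ?_
  · exact (Measurable.aestronglyMeasurable (by fun_prop)).restrict
  · filter_upwards [ae_restrict_mem measurableSet_Ioi] with H hH
    have hH' : (0:ℝ) < H := lt_of_lt_of_le hc (le_of_lt (lt_of_le_of_lt hcd hH))
    have h1 : 0 < 1 / H := by positivity
    have h2 : 1 / H ≤ 1 / c :=
      one_div_le_one_div_of_le hc (le_of_lt (lt_of_le_of_lt hcd hH))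
    simp only [norm_mul, Real.norm_eq_abs, abs_of_pos (exp_pos _)]
    apply mul_le_mul_of_nonneg_right _ (le_of_lt (exp_pos _))
    rw [abs_of_nonneg (by linarith : (0:ℝ) ≤ 1 / c - 1 / H),
      abs_of_pos (by positivity : (0:ℝ) < 1 / c)]
    linarith

/-- The water-filling power functional `φ(α) = ∫_α^∞ (1/α − 1/H)·e^{−H} dH`
is strictly decreasing on `(0,∞)`. -/
theorem wf_power_functional_strictAnti :
    StrictAntiOn (fun α : ℝ => ∫ H in Ioi α, (1 / α - 1 / H) * Real.exp (-H))
      (Ioi (0 : ℝ)) := by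
  intro a ha b hb hab
  simp only [mem_Ioi] at ha hb
  have hIab : IntegrableOn (fun H : ℝ => (1 / a - 1 / H) * Real.exp (-H)) (Ioi b) :=
    wf_int ha hab.le
  have hIbb : IntegrableOn (fun H : ℝ => (1 / b - 1 / H) * Real.exp (-H)) (Ioi b) :=
    wf_int hb le_rfl
  have step1 : (∫ H in Ioi b, (1 / b - 1 / H) * Real.exp (-H))
      < ∫ H in Ioi b, (1 / a - 1 / H) * Real.exp (-H) := by
    have hdiff : (∫ H in Ioi b, (1 / a - 1 / H) * Real.exp (-H))
        - ∫ H in Ioi b, (1 / b - 1 / H) * Real.exp (-H)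
        = (1 / a - 1 / b) * Real.exp (-b) := by
      rw [← integral_sub hIab hIbb]
      have : ∀ H : ℝ, (1 / a - 1 / H) * Real.exp (-H) - (1 / b - 1 / H) * Real.exp (-H)
          = (1 / a - 1 / b) * Real.exp (-H) := by intro H; ring
      simp only [this]
      rw [integral_const_mul, integral_exp_neg_Ioi]
    have hpos : 0 < (1 / a - 1 / b) * Real.exp (-b) := by
      have : 1 / b < 1 / a := one_div_lt_one_div_of_lt ha hab
      have := exp_pos (-b)
      nlinarith
    linarith
  have step2 : (∫ H in Ioi b, (1 / a - 1 / H) * Real.exp (-H))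
      ≤ ∫ H in Ioi a, (1 / a - 1 / H) * Real.exp (-H) := by
    apply setIntegral_mono_set (wf_int ha le_rfl)
    · filter_upwards [ae_restrict_mem measurableSet_Ioi] with H hH
      have hH' : a < H := hH
      have h3 : 1 / H ≤ 1 / a := one_div_le_one_div_of_le ha hH'.le
      have h4 : (0:ℝ) ≤ 1 / a - 1 / H := by linarith
      positivity
    · exact HasSubset.Subset.eventuallyLE (Ioi_subset_Ioi hab.le)
  exact lt_of_lt_of_le step1 step2
end

section
/- For every k > 0 there exists a unique α > 0 such that ∫_α^∞ (1/α − 1/H)·e^{−H} dH = k. That is, the water-filling threshold equation has a unique positive solution for every positive power-constraint constant k. -/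
/-!
Splitting the integrand, `φ(α) = e^{-α}/α - E₁(α)` with `E₁(α) = ∫_α^∞ e^{-H}/H dH`, so
`φ'(α) = -e^{-α}/α² < 0`: `φ` is continuous and strictly decreasing on `(0, ∞)`. Since
`φ(α) < 1/α` and `φ(α) ≥ (1/α - 1)/e` for `α ≤ 1`, it takes values above and below every
`k > 0`, and the intermediate value theorem gives the unique root.
-/

open MeasureTheory Real Set Filter Topology

theorem hasDerivAt_integral_Ioi {E : Type*} [NormedAddCommGroup E] [NormedSpace ℝ E]
    [CompleteSpace E] {f : ℝ → E} {a x : ℝ} (hf : IntegrableOn f (Ioi a)) (hax : a < x)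
    (hfx : ContinuousAt f x) : HasDerivAt (fun b => ∫ t in Ioi b, f t) (-f x) x := by
  have hint : IntervalIntegrable f volume a x :=
    (intervalIntegrable_iff_integrableOn_Ioc_of_le hax.le).2 (hf.mono_set Ioc_subset_Ioi_self)
  have hmeas : StronglyMeasurableAtFilter f (𝓝 x) :=
    AEStronglyMeasurable.stronglyMeasurableAtFilter_of_mem hf.aestronglyMeasurable
      (Ioi_mem_nhds hax)
  have hderiv := (hasDerivAt_const x (∫ t in Ioi a, f t)).sub
    (intervalIntegral.integral_hasDerivAt_right hint hmeas hfx)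
  rw [zero_sub] at hderiv
  refine hderiv.congr_of_eventuallyEq ?_
  filter_upwards [Ioi_mem_nhds hax] with b hb
  rw [Pi.sub_apply, ← intervalIntegral.integral_Ioi_sub_Ioi hf (le_of_lt hb), sub_sub_cancel]

theorem integrableOn_one_div_mul_exp_neg_Ioi {a : ℝ} (ha : 0 < a) :
    IntegrableOn (fun H => 1 / H * exp (-H)) (Ioi a) := by
  refine ((integrableOn_exp_neg_Ioi a).const_mul (1 / a)).mono'
    (by fun_prop : Measurable fun H : ℝ => 1 / H * exp (-H)).aestronglyMeasurable ?_
  filter_upwards [ae_restrict_mem measurableSet_Ioi] with H (hH : a < H)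
  rw [norm_of_nonneg (by positivity [ha.trans hH])]
  gcongr

noncomputable def waterFillingPower (α : ℝ) : ℝ :=
  ∫ H in Ioi α, (1 / α - 1 / H) * exp (-H)

theorem waterFillingPower_eq {α : ℝ} (hα : 0 < α) :
    waterFillingPower α = 1 / α * exp (-α) - ∫ H in Ioi α, 1 / H * exp (-H) := by
  simp_rw [waterFillingPower, sub_mul]
  rw [integral_sub ((integrableOn_exp_neg_Ioi α).const_mul _)
    (integrableOn_one_div_mul_exp_neg_Ioi hα), integral_const_mul, integral_exp_neg_Ioi]

theorem hasDerivAt_waterFillingPower {α : ℝ} (hα : 0 < α) :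
    HasDerivAt waterFillingPower (-(exp (-α) / α ^ 2)) α := by
  have hE := hasDerivAt_integral_Ioi (integrableOn_one_div_mul_exp_neg_Ioi (half_pos hα))
    (half_lt_self hα) ((continuousAt_const.div continuousAt_id hα.ne').mul
      (continuous_exp.comp continuous_neg).continuousAt)
  have hderiv := ((hasDerivAt_inv hα.ne').mul (hasDerivAt_neg α).exp).sub hE
  refine (hderiv.congr_of_eventuallyEq ?_).congr_deriv ?_
  · filter_upwards [Ioi_mem_nhds hα] with b hb
    rw [Pi.sub_apply, Pi.mul_apply, waterFillingPower_eq hb, one_div]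
  · field_simp
    ring

theorem continuousOn_waterFillingPower : ContinuousOn waterFillingPower (Ioi 0) :=
  fun _ hα => (hasDerivAt_waterFillingPower hα).continuousAt.continuousWithinAt

theorem strictAntiOn_waterFillingPower : StrictAntiOn waterFillingPower (Ioi 0) := by
  refine strictAntiOn_of_deriv_neg (convex_Ioi 0) continuousOn_waterFillingPower fun α hα => ?_
  rw [interior_Ioi, mem_Ioi] at hα
  rw [(hasDerivAt_waterFillingPower hα).deriv, neg_lt_zero]
  positivity

theorem waterFillingPower_lt_one_div {α : ℝ} (hα : 0 < α) : waterFillingPower α < 1 / α := by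
  have hE : 0 ≤ ∫ H in Ioi α, 1 / H * exp (-H) :=
    setIntegral_nonneg measurableSet_Ioi fun H (hH : α < H) => by positivity [hα.trans hH]
  calc waterFillingPower α ≤ 1 / α * exp (-α) := by rw [waterFillingPower_eq hα]; linarith
    _ < 1 / α * 1 := by gcongr; exact exp_lt_one_iff.2 (neg_lt_zero.2 hα)
    _ = 1 / α := mul_one _

theorem one_div_sub_one_mul_exp_neg_one_le_waterFillingPower {α : ℝ} (hα : 0 < α) (hα1 : α ≤ 1) :
    (1 / α - 1) * exp (-1) ≤ waterFillingPower α := by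
  have hint : IntegrableOn (fun H => (1 / α - 1 / H) * exp (-H)) (Ioi α) := by
    simp_rw [sub_mul]
    exact ((integrableOn_exp_neg_Ioi α).const_mul _).sub (integrableOn_one_div_mul_exp_neg_Ioi hα)
  have hnonneg : ∀ H ∈ Ioi α, 0 ≤ (1 / α - 1 / H) * exp (-H) := fun H (hH : α < H) =>
    mul_nonneg (sub_nonneg.2 (one_div_le_one_div_of_le hα hH.le)) (exp_pos _).le
  calc (1 / α - 1) * exp (-1) = ∫ H in Ioi 1, (1 / α - 1) * exp (-H) := by
        rw [integral_const_mul, integral_exp_neg_Ioi]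
    _ ≤ ∫ H in Ioi 1, (1 / α - 1 / H) * exp (-H) :=
        setIntegral_mono_on ((integrableOn_exp_neg_Ioi 1).const_mul _)
          (hint.mono_set (Ioi_subset_Ioi hα1)) measurableSet_Ioi fun H (hH : 1 < H) => by
            gcongr
            rw [div_le_one (zero_lt_one.trans hH)]
            exact hH.le
    _ ≤ waterFillingPower α :=
        setIntegral_mono_set hint ((ae_restrict_iff' measurableSet_Ioi).2 (ae_of_all _ hnonneg))
          (Ioi_subset_Ioi hα1).eventuallyLE

/-- For every power-constraint constant `k > 0`, the water-filling threshold equation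
`∫_α^∞ (1/α − 1/H)·e^{−H} dH = k` has a unique positive solution `α`. -/
theorem wf_threshold_exists_unique (k : ℝ) (hk : 0 < k) :
    ∃! α : ℝ, 0 < α ∧ (∫ H in Ioi α, (1 / α - 1 / H) * Real.exp (-H)) = k := by
  -- chosen so that `(1 / a - 1) * exp (-1) = k + exp (-1)`
  set a := 1 / (k * exp 1 + 2) with ha_def
  have ha : 0 < a := by positivity
  have hk_lt_a : k < waterFillingPower a := calc
      k < (1 / a - 1) * exp (-1) := by
        rw [ha_def, one_div_one_div, exp_neg]
        field_simp
        linarith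
      _ ≤ waterFillingPower a := one_div_sub_one_mul_exp_neg_one_le_waterFillingPower ha
        (by rw [ha_def, div_le_one (by positivity)]; nlinarith [exp_pos 1])
  have hb_lt_k : waterFillingPower (1 / k) < k := by
    simpa using waterFillingPower_lt_one_div (one_div_pos.2 hk)
  obtain ⟨α, hα, hαk⟩ := isPreconnected_Ioi.intermediate_value (one_div_pos.2 hk) ha
    continuousOn_waterFillingPower ⟨hb_lt_k.le, hk_lt_a.le⟩
  exact ⟨α, ⟨hα, hαk⟩, fun β hβ =>
    strictAntiOn_waterFillingPower.injOn hβ.1 hα (hβ.2.trans hαk.symm)⟩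
end

section
/- Let (Ω,P) be a probability space carrying a random variable H with the exponential distribution of rate 1 and an independent Bernoulli random variable B with success probability p ∈ [0,1]. Let α > 0 and k = ∫_α^∞ (1/α − 1/H)·e^{−H} dH. Define the aggressive water-filling realized rate R = (1 − B)·log₂(H/α)·1{H ≥ α} (rate is zero on interfered symbols, which are in outage, and when H < α). Then E[R] = (1 − p)·log₂(e)·(e^{−α}/α − k). -/
/-!
By independence, `E[R] = E[1 - B] · E[g H]` with `g = log₂(· / α)` on `[α, ∞)` and `0` below, and
`E[1 - B] = 1 - p`. Against the density `e^{-x}`, integration by parts turns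
`∫_α^∞ log(x/α) e^{-x} dx` into `∫_α^∞ e^{-x}/x dx`, the boundary terms vanishing at both ends; the
power constraint expresses the same integral as `e^{-α}/α - k`.
-/

open MeasureTheory ProbabilityTheory Real Set
open Filter Topology

lemma integral_eq_measureReal_of_forall_eq_zero_or_eq_one {Ω : Type*} [MeasurableSpace Ω]
    {μ : Measure Ω} {B : Ω → ℝ} (hBm : Measurable B) (hB : ∀ ω, B ω = 0 ∨ B ω = 1) :
    ∫ ω, B ω ∂μ = μ.real {ω | B ω = 1} := by
  have hs : MeasurableSet {ω | B ω = 1} := hBm (measurableSet_singleton 1)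
  calc ∫ ω, B ω ∂μ = ∫ ω, {ω | B ω = 1}.indicator (fun _ => (1 : ℝ)) ω ∂μ := by
        congr 1 with ω
        rcases hB ω with h | h <;> simp [h]
    _ = μ.real {ω | B ω = 1} := by
        rw [integral_indicator_const _ hs, smul_eq_mul, mul_one]

lemma setIntegral_expMeasure {E : Type*} [NormedAddCommGroup E] [NormedSpace ℝ E] {r : ℝ}
    (hr : 0 ≤ r) {s : Set ℝ} (hs : MeasurableSet s) (hs_nonneg : s ⊆ Ici 0) (f : ℝ → E) :
    ∫ x in s, f x ∂expMeasure r = ∫ x in s, (r * exp (-(r * x))) • f x := by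
  change ∫ x in s, f x ∂volume.withDensity (exponentialPDF r) = _
  rw [setIntegral_withDensity_eq_setIntegral_toReal_smul (f := exponentialPDF r)
    (measurable_exponentialPDFReal r).ennreal_ofReal
    (ae_of_all _ fun _ => ENNReal.ofReal_lt_top) _ hs]
  refine setIntegral_congr_fun hs fun x hx => ?_
  rw [exponentialPDF_of_nonneg (hs_nonneg hx), ENNReal.toReal_ofReal (by positivity)]

lemma norm_log_div_mul_exp_neg_le {α x : ℝ} (hα : 0 < α) (hx : α ≤ x) :
    ‖log (x / α) * exp (-x)‖ ≤ α⁻¹ * (x * exp (-x)) := by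
  have hlog : 0 ≤ log (x / α) := log_nonneg ((one_le_div hα).2 hx)
  rw [norm_of_nonneg (mul_nonneg hlog (exp_pos _).le), ← mul_assoc, inv_mul_eq_div]
  exact mul_le_mul_of_nonneg_right (log_le_self (div_pos (hα.trans_le hx) hα).le) (exp_pos _).le

lemma integrableOn_exp_neg_div_Ioi {α : ℝ} (hα : 0 < α) :
    IntegrableOn (fun x => exp (-x) / x) (Ioi α) := by
  refine ((exp_neg_integrableOn_Ioi α one_pos).div_const α).mono'
    (by fun_prop : Measurable fun x : ℝ => exp (-x) / x).aestronglyMeasurable ?_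
  filter_upwards [self_mem_ae_restrict measurableSet_Ioi] with x (hx : α < x)
  rw [norm_of_nonneg (div_nonneg (exp_pos _).le (hα.trans hx).le), neg_mul, one_mul]
  exact div_le_div_of_nonneg_left (exp_pos _).le hα hx.le

lemma integrableOn_log_div_mul_exp_neg_Ioi {α : ℝ} (hα : 0 < α) :
    IntegrableOn (fun x => log (x / α) * exp (-x)) (Ioi α) := by
  have hbound : IntegrableOn (fun x => α⁻¹ * (x * exp (-x))) (Ioi α) := by
    refine Integrable.const_mul ?_ _
    refine ((GammaIntegral_convergent two_pos).mono_set (Ioi_subset_Ioi hα.le)).congr_fun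
      (fun x _ => ?_) measurableSet_Ioi
    norm_num [mul_comm]
  refine hbound.mono'
    (by fun_prop : Measurable fun x => log (x / α) * exp (-x)).aestronglyMeasurable ?_
  filter_upwards [self_mem_ae_restrict measurableSet_Ioi] with x (hx : α < x)
  exact norm_log_div_mul_exp_neg_le hα hx.le

lemma integral_log_div_mul_exp_neg_Ioi {α : ℝ} (hα : 0 < α) :
    ∫ x in Ioi α, log (x / α) * exp (-x) = ∫ x in Ioi α, exp (-x) / x := by
  have hu : ∀ x ∈ Ioi α, HasDerivAt (fun y => log (y / α)) x⁻¹ x := fun x (hx : α < x) => by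
    refine (((hasDerivAt_id x).div_const α).log (div_pos (hα.trans hx) hα).ne').congr_deriv ?_
    simp [field]
  have hv : ∀ x ∈ Ioi α, HasDerivAt (fun y => -exp (-y)) (exp (-x)) x := fun x _ =>
    (hasDerivAt_neg x).exp.neg.congr_deriv (by simp)
  have h_zero : Tendsto (fun y => log (y / α) * -exp (-y)) (𝓝[>] α) (𝓝 0) := by
    have : ContinuousAt (fun y => log (y / α) * -exp (-y)) α :=
      ((continuousAt_id.div_const α).log (div_pos hα hα).ne').mul (by fun_prop)
    simpa [div_self hα.ne'] using this.tendsto.mono_left nhdsWithin_le_nhds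
  have h_infty : Tendsto (fun y => log (y / α) * -exp (-y)) atTop (𝓝 0) := by
    have hdom : Tendsto (fun y => α⁻¹ * (y ^ 1 * exp (-y))) atTop (𝓝 0) := by
      simpa using (tendsto_pow_mul_exp_neg_atTop_nhds_zero 1).const_mul α⁻¹
    refine squeeze_zero_norm' ?_ hdom
    filter_upwards [eventually_ge_atTop α] with x hx
    simpa [mul_neg, norm_neg] using norm_log_div_mul_exp_neg_le hα hx
  have hu'v : IntegrableOn (fun x => x⁻¹ * -exp (-x)) (Ioi α) := by
    simpa [div_eq_inv_mul] using (integrableOn_exp_neg_div_Ioi hα).neg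
  rw [integral_Ioi_mul_deriv_eq_deriv_mul hu hv (integrableOn_log_div_mul_exp_neg_Ioi hα)
    hu'v h_zero h_infty]
  simp only [mul_neg, integral_neg, sub_zero, zero_sub, neg_neg, div_eq_inv_mul]

lemma integral_one_div_sub_one_div_mul_exp_neg_Ioi {α : ℝ} (hα : 0 < α) :
    ∫ x in Ioi α, (1 / α - 1 / x) * exp (-x) = exp (-α) / α - ∫ x in Ioi α, exp (-x) / x := by
  have hexp : IntegrableOn (fun x => exp (-x)) (Ioi α) := by
    simpa using exp_neg_integrableOn_Ioi α one_pos
  simp_rw [sub_mul, one_div_mul_eq_div]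
  rw [integral_sub (hexp.div_const α) (integrableOn_exp_neg_div_Ioi hα), integral_div,
    integral_exp_neg_Ioi]

lemma integral_indicator_logb_div_expMeasure_one {α : ℝ} (hα : 0 < α) (b : ℝ) :
    ∫ x, (Ici α).indicator (fun x => logb b (x / α)) x ∂expMeasure 1
      = logb b (exp 1) * ∫ x in Ioi α, exp (-x) / x := by
  rw [integral_indicator measurableSet_Ici, setIntegral_expMeasure zero_le_one measurableSet_Ici
    (Ici_subset_Ici.2 hα.le), integral_Ici_eq_integral_Ioi, ← integral_log_div_mul_exp_neg_Ioi hα,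
    ← integral_const_mul]
  refine setIntegral_congr_fun measurableSet_Ioi fun x _ => ?_
  simp only [logb, log_exp, one_mul, smul_eq_mul]
  ring

theorem aggressive_wf_average_spectral_efficiency_general
    {Ω : Type*} [MeasurableSpace Ω] (Pr : Measure Ω) [IsProbabilityMeasure Pr]
    (H B : Ω → ℝ) (hHm : Measurable H) (hBm : Measurable B)
    (hH : Measure.map H Pr = ProbabilityTheory.expMeasure 1)
    (p : ℝ) (hp0 : 0 ≤ p)
    (hB01 : ∀ ω, B ω = 0 ∨ B ω = 1)
    (hBp : Pr {ω | B ω = 1} = ENNReal.ofReal p)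
    (hindep : IndepFun H B Pr)
    (α k : ℝ) (hα : 0 < α)
    (hk : k = ∫ x in Ioi α, (1 / α - 1 / x) * Real.exp (-x))
    (R : Ω → ℝ)
    (hR : ∀ ω, R ω =
      (1 - B ω) * Real.logb 2 (H ω / α) * (if α ≤ H ω then 1 else 0)) :
    ∫ ω, R ω ∂Pr
      = (1 - p) * Real.logb 2 (Real.exp 1) * (Real.exp (-α) / α - k) := by
  set g : ℝ → ℝ := (Ici α).indicator fun x => logb 2 (x / α)
  have hg : Measurable g :=
    (by unfold logb; fun_prop : Measurable fun x => logb 2 (x / α)).indicator measurableSet_Ici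
  have hR_eq : ∀ ω, R ω = (1 - B ω) * g (H ω) := fun ω => by
    rw [hR]
    simp only [g, indicator_apply, mem_Ici]
    split_ifs <;> ring
  have hB_int : Integrable B Pr := .of_bound hBm.aestronglyMeasurable 1 <| ae_of_all _ fun ω => by
    rcases hB01 ω with h | h <;> simp [h]
  have hE_one_sub_B : ∫ ω, (1 - B ω) ∂Pr = 1 - p := by
    rw [integral_sub (integrable_const 1) hB_int, integral_const, probReal_univ, one_smul,
      integral_eq_measureReal_of_forall_eq_zero_or_eq_one hBm hB01, measureReal_def, hBp,
      ENNReal.toReal_ofReal hp0]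
  have hE_gH : ∫ ω, g (H ω) ∂Pr = ∫ x, g x ∂expMeasure 1 := by
    rw [← hH, integral_map hHm.aemeasurable hg.aestronglyMeasurable]
  have hindep_factors : IndepFun (fun ω => 1 - B ω) (fun ω => g (H ω)) Pr :=
    hindep.symm.comp (measurable_const.sub measurable_id) hg
  simp only [hR_eq]
  rw [hindep_factors.integral_fun_mul_eq_mul_integral
      (measurable_const.sub hBm).aestronglyMeasurable (hg.comp hHm).aestronglyMeasurable,
    hE_one_sub_B, hE_gH, integral_indicator_logb_div_expMeasure_one hα, hk,
    integral_one_div_sub_one_div_mul_exp_neg_Ioi hα, sub_sub_cancel, mul_assoc]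

/-- Aggressive water-filling: with unit-rate exponential channel power `H`, independent
Bernoulli(`p`) interference indicator `B`, threshold `α` satisfying the power constraint
`∫_α^∞ (1/α − 1/H)e^{−H} dH = k`, and realized rate `R = (1−B)·log₂(H/α)·1{H ≥ α}`
(interfered symbols are in outage and carry zero rate), the average spectral efficiency is
`E[R] = (1−p)·log₂(e)·(e^{−α}/α − k)`. -/
theorem aggressive_wf_average_spectral_efficiency
    {Ω : Type*} [MeasurableSpace Ω] (Pr : Measure Ω) [IsProbabilityMeasure Pr]
    (H B : Ω → ℝ) (hHm : Measurable H) (hBm : Measurable B)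
    (hH : Measure.map H Pr = ProbabilityTheory.expMeasure 1)
    (p : ℝ) (hp0 : 0 ≤ p) (hp1 : p ≤ 1)
    (hB01 : ∀ ω, B ω = 0 ∨ B ω = 1)
    (hBp : Pr {ω | B ω = 1} = ENNReal.ofReal p)
    (hindep : IndepFun H B Pr)
    (α k : ℝ) (hα : 0 < α)
    (hk : k = ∫ x in Ioi α, (1 / α - 1 / x) * Real.exp (-x))
    (R : Ω → ℝ)
    (hR : ∀ ω, R ω =
      (1 - B ω) * Real.logb 2 (H ω / α) * (if α ≤ H ω then 1 else 0)) :
    ∫ ω, R ω ∂Pr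
      = (1 - p) * Real.logb 2 (Real.exp 1) * (Real.exp (-α) / α - k) :=
  aggressive_wf_average_spectral_efficiency_general Pr H B hHm hBm hH p hp0 hB01 hBp hindep α k hα
    hk R hR
end
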